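/- arXiv:1501.01999 — 2 statements merged into one kernel-verified Lean document; each statement's English description precedes it below -/
import Mathlib

section
/- Let F : S ⇄ T : G be adjoint exact (triangulated) functors between triangulated categories. Then the following are equivalent: (i) G is faithful; (ii) F is surjective up to direct summands, i.e. every object x ∈ T is a retract of F(y) for some y ∈ S; (iii) the counit of adjunction ε_x : F G(x) → x admits a (possibly unnatural) section for every object x ∈ T. -/
/-!
Formalization of statements from "Grothendieck-Neeman duality and the
Wirthmüller isomorphism" by Balmer, Dell'Ambrogio and Sanders.
-/

noncomputable section

open CategoryTheory CategoryTheory.Limits CategoryTheory.Pretriangulated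
  CategoryTheory.MonoidalCategory CategoryTheory.MonoidalClosed Opposite

universe v u u₁ u₂ u₃

namespace GN

section Compact

variable {C : Type u} [Category.{v} C]

/-- An object `t` is compact if `Hom(t, -)`, viewed as a functor to abelian groups,
preserves small coproducts. -/
def IsCompactObj [Preadditive C] (t : C) : Prop :=
  ∀ J : Type v, Nonempty (PreservesColimitsOfShape (Discrete J)
    (preadditiveCoyoneda.obj (op t)))

/-- A functor preserves arbitrary (small) coproducts. -/
def PreservesCoproducts {D : Type u₂} [Category.{v} D] (F : C ⥤ D) : Prop :=
  ∀ J : Type v, Nonempty (PreservesColimitsOfShape (Discrete J) F)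

/-- A functor preserves arbitrary (small) products. -/
def PreservesProducts {D : Type u₂} [Category.{v} D] (F : C ⥤ D) : Prop :=
  ∀ J : Type v, Nonempty (PreservesLimitsOfShape (Discrete J) F)

/-- A compactly generated category: it admits all small coproducts and
has a set of compact generators. -/
structure CompactlyGenerated (C : Type u) [Category.{v} C] [Preadditive C] : Prop where
  hasCoproducts : HasCoproducts.{v} C
  exists_generators : ∃ (ι : Type v) (G : ι → C), (∀ i, IsCompactObj (G i)) ∧
    ∀ t : C, (∀ (i : ι) (f : G i ⟶ t), f = 0) → IsZero t

end Compact

section Tensor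

variable {C : Type u} [Category.{v} C] [MonoidalCategory C] [MonoidalClosed C]

/-- The canonical map `hom(x,𝟙) ⊗ y ⟶ hom(x,y)`. -/
def rigidComparison (x y : C) : (ihom x).obj (𝟙_ C) ⊗ y ⟶ (ihom x).obj y :=
  MonoidalClosed.curry ((α_ x ((ihom x).obj (𝟙_ C)) y).inv ≫
    (((ihom.ev x).app (𝟙_ C)) ▷ y) ≫ (λ_ y).hom)

/-- An object `x` is rigid if `hom(x,𝟙) ⊗ y ⟶ hom(x,y)` is an isomorphism for all `y`. -/
def IsRigid (x : C) : Prop := ∀ y : C, IsIso (rigidComparison x y)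

/-- An object `u` is `⊗`-invertible if `u ⊗ v ≅ 𝟙` for some `v`. -/
def TensorInvertible (u : C) : Prop := ∃ v : C, Nonempty (u ⊗ v ≅ 𝟙_ C)

/-- The `κ`-twisted duality functor `D_κ = hom(-,κ)`. -/
@[reducible] def Dfun (κ : C) : Cᵒᵖ ⥤ C := MonoidalClosed.internalHom.flip.obj κ

/-- The canonical double-duality map `ϖ : x ⟶ D_κ D_κ (x)`, i.e. the unit/counit of the
self-adjunction of `D_κ = hom(-,κ)`. -/
def varpi [BraidedCategory C] (κ x : C) : x ⟶ (ihom ((ihom x).obj κ)).obj κ :=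
  MonoidalClosed.curry ((β_ ((ihom x).obj κ) x).hom ≫ (ihom.ev x).app κ)

/-- A rigidly-compactly generated tensor-triangulated category: it admits all small
coproducts, its compact objects coincide with its rigid objects, and it has a set of
compact generators. -/
structure RigidlyCompactlyGenerated (C : Type u) [Category.{v} C] [Preadditive C]
    [MonoidalCategory C] [MonoidalClosed C] : Prop where
  hasCoproducts : HasCoproducts.{v} C
  compact_iff_rigid : ∀ x : C, IsCompactObj x ↔ IsRigid x
  exists_generators : ∃ (ι : Type v) (G : ι → C), (∀ i, IsCompactObj (G i)) ∧
    ∀ t : C, (∀ (i : ι) (f : G i ⟶ t), f = 0) → IsZero t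

end Tensor

section Triang

variable {C : Type u} [Category.{v} C] [HasZeroObject C] [Preadditive C] [HasShift C ℤ]
  [∀ n : ℤ, (shiftFunctor C n).Additive] [Pretriangulated C]

/-- A thick triangulated subcategory, given as a predicate on objects:
it contains the zero objects, and is closed under shifts, cones and direct summands
(hence in particular under isomorphisms). -/
structure IsThickSubcategory (S : Set C) : Prop where
  zero : ∀ x : C, IsZero x → x ∈ S
  shift : ∀ x ∈ S, ∀ n : ℤ, x⟦n⟧ ∈ S
  ext₃ : ∀ T : Triangle C, (T ∈ distTriang C) → T.obj₁ ∈ S → T.obj₂ ∈ S → T.obj₃ ∈ S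
  retract : ∀ x y : C, (∃ (s : x ⟶ y) (r : y ⟶ x), s ≫ r = 𝟙 x) → y ∈ S → x ∈ S

/-- The thick subcategory generated by a set of objects. -/
def thickClosure (S : Set C) : Set C :=
  { x | ∀ T : Set C, IsThickSubcategory T → S ⊆ T → x ∈ T }

/-- A `C^c`-submodule of `C`: a thick triangulated subcategory which is closed under
tensoring with compact objects. -/
structure IsSubmodule [MonoidalCategory C] (S : Set C) extends IsThickSubcategory S : Prop where
  smul : ∀ c x : C, IsCompactObj c → x ∈ S → (c ⊗ x) ∈ S

end Triang

section Dual

variable {C : Type u} [Category.{v} C] [MonoidalCategory C] [BraidedCategory C]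
  [MonoidalClosed C]

/-- `κ` is a (possibly external) dualizing object for `S ⊆ C`: the `κ`-twisted
duality `D_κ = hom(-,κ)` preserves `S` and every object of `S` is `κ`-reflexive;
equivalently, `D_κ` restricts to an anti-equivalence `S^op ≃ S`. -/
structure IsExternalDualizing (S : Set C) (κ : C) : Prop where
  stable : ∀ x ∈ S, (ihom x).obj κ ∈ S
  reflexive : ∀ x ∈ S, IsIso (varpi κ x)

/-- `κ ∈ S` is a dualizing object for `S`. -/
structure IsDualizing (S : Set C) (κ : C) extends IsExternalDualizing S κ : Prop where
  mem : κ ∈ S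

end Dual

section Pullback

variable {C : Type u₁} {D : Type u₂} [Category.{v} C] [Category.{v} D]
  [Preadditive C] [MonoidalCategory C]

/-- The compact pull-back `f^#(D₀)` of a subcategory `D₀ ⊆ D` along `f_* : C ⥤ D`. -/
def compactPullback (fpush : C ⥤ D) (D₀ : Set D) : Set C :=
  { x | ∀ c : C, IsCompactObj c → fpush.obj (c ⊗ x) ∈ D₀ }

end Pullback

section Proj

variable {D : Type u₁} {C : Type u₂} [Category.{v} D] [Category.{v} C]
  [MonoidalCategory D] [MonoidalCategory C]

/-- The canonical projection formula map `π : x ⊗ f_*(y) ⟶ f_*(f^*(x) ⊗ y)`,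
obtained by adjunction from `f^*(x ⊗ f_* y) ≅ f^* x ⊗ f^* f_* y → f^* x ⊗ y`. -/
def projFormula (fstar : D ⥤ C) [fstar.Monoidal] (fpush : C ⥤ D) (adj : fstar ⊣ fpush)
    (x : D) (y : C) : x ⊗ fpush.obj y ⟶ fpush.obj (fstar.obj x ⊗ y) :=
  (adj.homEquiv _ _)
    (Functor.OplaxMonoidal.δ fstar x (fpush.obj y) ≫ (fstar.obj x ◁ adj.counit.app y))

/-- The canonical comparison map `f^(1)(x) ⊗ f^*(y) ⟶ f^(1)(x ⊗ y)`, obtained by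
adjunction from the counit `f_* f^(1) → Id` via the projection formula. -/
def gnComparison [BraidedCategory D] [BraidedCategory C] (fstar : D ⥤ C) [fstar.Monoidal]
    (fpush : C ⥤ D) (adj1 : fstar ⊣ fpush) (fone : D ⥤ C) (adj2 : fpush ⊣ fone)
    (hπ : ∀ (x : D) (y : C), IsIso (projFormula fstar fpush adj1 x y)) (x y : D) :
    fone.obj x ⊗ fstar.obj y ⟶ fone.obj (x ⊗ y) :=
  haveI := hπ y (fone.obj x)
  (adj2.homEquiv _ _)
    (fpush.map (β_ (fone.obj x) (fstar.obj y)).hom ≫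
      inv (projFormula fstar fpush adj1 y (fone.obj x)) ≫
      (β_ y (fpush.obj (fone.obj x))).hom ≫ (adj2.counit.app x ▷ y))

end Proj

end GN

/-! A right adjoint is faithful exactly when every component of the counit is an epimorphism.
In a pretriangulated category every epimorphism splits (its cone map vanishes), and a retraction
`F y ⟶ x` factors through the counit at `x`, so all three conditions amount to the counit being
split epi. -/

namespace CategoryTheory

lemma isSplitEpi_iff_exists_section {C : Type u} [Category.{v} C] {X Y : C} (f : X ⟶ Y) :
    IsSplitEpi f ↔ ∃ s : Y ⟶ X, s ≫ f = 𝟙 Y :=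
  ⟨fun _ => ⟨section_ f, IsSplitEpi.id f⟩, fun ⟨s, hs⟩ => IsSplitEpi.mk' ⟨s, hs⟩⟩

namespace Adjunction

variable {C : Type u₁} {D : Type u₂} [Category.{v} C] [Category.{v} D] {F : C ⥤ D} {G : D ⥤ C}

lemma isSplitEpi_counit_app_of_retract (adj : F ⊣ G) {x : D} {y : C} (s : x ⟶ F.obj y)
    (r : F.obj y ⟶ x) (hsr : s ≫ r = 𝟙 x) : IsSplitEpi (adj.counit.app x) :=
  IsSplitEpi.mk' ⟨s ≫ F.map (adj.homEquiv _ _ r), by simp [← adj.homEquiv_counit, hsr]⟩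

lemma faithful_of_forall_retract (adj : F ⊣ G)
    (h : ∀ x : D, ∃ (y : C) (s : x ⟶ F.obj y) (r : F.obj y ⟶ x), s ≫ r = 𝟙 x) : G.Faithful :=
  have (x : D) : IsSplitEpi (adj.counit.app x) := by
    obtain ⟨y, s, r, hsr⟩ := h x
    exact adj.isSplitEpi_counit_app_of_retract s r hsr
  adj.faithful_R_of_epi_counit_app

lemma faithful_iff_isSplitEpi_counit_app [SplitEpiCategory D] (adj : F ⊣ G) :
    G.Faithful ↔ ∀ x : D, IsSplitEpi (adj.counit.app x) :=
  ⟨fun _ _ => isSplitEpi_of_epi _, fun _ => adj.faithful_R_of_epi_counit_app⟩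

lemma faithful_iff_forall_retract [SplitEpiCategory D] (adj : F ⊣ G) :
    G.Faithful ↔ ∀ x : D, ∃ (y : C) (s : x ⟶ F.obj y) (r : F.obj y ⟶ x), s ≫ r = 𝟙 x := by
  refine ⟨fun hG x => ?_, adj.faithful_of_forall_retract⟩
  obtain ⟨s, hs⟩ := (isSplitEpi_iff_exists_section _).1
    (adj.faithful_iff_isSplitEpi_counit_app.1 hG x)
  exact ⟨G.obj x, s, adj.counit.app x, hs⟩

end Adjunction

end CategoryTheory

namespace GN

/-- Lemma 4.2. -/
theorem statement7 {S : Type u₁} {T : Type u₂}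
    [Category.{v} S] [Preadditive S] [HasZeroObject S] [HasShift S ℤ]
    [∀ n : ℤ, (shiftFunctor S n).Additive] [Pretriangulated S] [IsTriangulated S]
    [Category.{v} T] [Preadditive T] [HasZeroObject T] [HasShift T ℤ]
    [∀ n : ℤ, (shiftFunctor T n).Additive] [Pretriangulated T] [IsTriangulated T]
    (F : S ⥤ T) [F.CommShift ℤ] [F.IsTriangulated]
    (G : T ⥤ S) [G.CommShift ℤ] [G.IsTriangulated]
    (adj : F ⊣ G) :
    (G.Faithful ↔ ∀ x : T, ∃ (y : S) (s : x ⟶ F.obj y) (r : F.obj y ⟶ x), s ≫ r = 𝟙 x) ∧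
    (G.Faithful ↔ ∀ x : T, ∃ s : x ⟶ F.obj (G.obj x), s ≫ adj.counit.app x = 𝟙 x) :=
  ⟨adj.faithful_iff_forall_retract, adj.faithful_iff_isSplitEpi_counit_app.trans
    (forall_congr' fun _ => isSplitEpi_iff_exists_section _)⟩

end GN
end
end

section
/- Consider two composable coproduct-preserving tensor-exact functors g* : E → D and f* : D → C between rigidly-compactly generated tensor-triangulated categories, with composite (gf)* := f* ∘ g*, and let E₀ be any E^c-submodule of E. Then the compact pull-backs satisfy (gf)^#(E₀) = f^#(g^#(E₀)). -/
/-!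
Formalization of statements from "Grothendieck-Neeman duality and the
Wirthmüller isomorphism" by Balmer, Dell'Ambrogio and Sanders.
-/

noncomputable section

open CategoryTheory CategoryTheory.Limits CategoryTheory.Pretriangulated
  CategoryTheory.MonoidalCategory CategoryTheory.MonoidalClosed Opposite

universe v u u₁ u₂ u₃

namespace GN

/-!
A compact `d ∈ D` is rigid, hence dualizable, so `d ⊗ -` is right adjoint to `ᘁd ⊗ -`. The
monoidal functor `f^*` carries this duality to one between `f^*(ᘁd)` and `f^*d`, and uniqueness
of adjoints gives the projection formula `d ⊗ f_*(y) ≅ f_*(f^*d ⊗ y)`. Moreover `f^*d ⊗ c` is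
compact for compact `c`, because `f^*d ⊗ -` has the coproduct-preserving right adjoint
`f^*(ᘁd) ⊗ -`. Hence `g_*(d ⊗ f_*(c ⊗ x)) ≅ (gf)_*((f^*d ⊗ c) ⊗ x)`, which gives
`(gf)^#(E₀) ⊆ f^#(g^#(E₀))`; the reverse inclusion is the case `d = 𝟙`, which is compact because
it is rigid.
-/

section Triang

variable {C : Type u} [Category.{v} C] [HasZeroObject C] [Preadditive C] [HasShift C ℤ]
  [∀ n : ℤ, (shiftFunctor C n).Additive] [Pretriangulated C]

theorem IsThickSubcategory.mem_of_iso {S : Set C} (hS : IsThickSubcategory S) {x y : C}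
    (e : x ≅ y) (hy : y ∈ S) : x ∈ S :=
  hS.retract x y ⟨e.hom, e.inv, e.hom_inv_id⟩ hy

end Triang

section Rigid

variable {C : Type u} [Category.{v} C] [MonoidalCategory C]

lemma whiskerLeft_comp_rightUnitor_hom_comp {X Y : C} (f : X ⟶ 𝟙_ C) (g : Y ⟶ 𝟙_ C) :
    X ◁ g ≫ (ρ_ X).hom ≫ f = f ▷ Y ≫ (λ_ Y).hom ≫ g := by
  rw [← rightUnitor_naturality, whisker_exchange_assoc, ← unitors_equal, leftUnitor_naturality]

variable [MonoidalClosed C]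

lemma unitNatIso_inv_app (y : C) :
    (unitNatIso (C := C)).inv.app y = (λ_ _).inv ≫ (ihom.ev (𝟙_ C)).app y := by
  simp [unitNatIso, conjugateIsoEquiv, conjugateEquiv]

theorem isRigid_unit : IsRigid (𝟙_ C) := by
  intro y
  have h : rigidComparison (𝟙_ C) y ≫ (unitNatIso (C := C)).inv.app y =
      (unitNatIso (C := C)).inv.app (𝟙_ C) ▷ y ≫ (λ_ y).hom := by
    simp only [unitNatIso_inv_app, rigidComparison, leftUnitor_inv_naturality_assoc,
      whiskerLeft_curry_ihom_ev_app, comp_whiskerRight, Category.assoc]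
    monoidal
  have : IsIso (rigidComparison (𝟙_ C) y ≫ (unitNatIso (C := C)).inv.app y) := by
    rw [h]
    infer_instance
  exact IsIso.of_isIso_comp_right _ ((unitNatIso (C := C)).inv.app y)

/-- The preimage of the name of `𝟙 x` under `hom(x,𝟙) ⊗ x ≅ hom(x,x)`. -/
def rigidCoev {x : C} (hx : IsRigid x) : 𝟙_ C ⟶ (ihom x).obj (𝟙_ C) ⊗ x :=
  haveI := hx x
  curry (ρ_ x).hom ≫ inv (rigidComparison x x)

lemma rigidCoev_coevaluation_evaluation {x : C} (hx : IsRigid x) :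
    x ◁ rigidCoev hx ≫ (α_ x _ x).inv ≫ (ihom.ev x).app (𝟙_ C) ▷ x =
      (ρ_ x).hom ≫ (λ_ x).inv := by
  have := hx x
  rw [← cancel_mono (λ_ x).hom]
  have h : (α_ x _ x).inv ≫ (ihom.ev x).app (𝟙_ C) ▷ x ≫ (λ_ x).hom =
      uncurry (rigidComparison x x) := by
    rw [rigidComparison, uncurry_curry]
  simp only [Category.assoc, Iso.inv_hom_id, Category.comp_id]
  rw [h, ← uncurry_natural_left, rigidCoev, Category.assoc, IsIso.inv_hom_id,
    Category.comp_id, uncurry_curry]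

lemma rigidCoev_evaluation_coevaluation {x : C} (hx : IsRigid x) :
    rigidCoev hx ▷ _ ≫ (α_ _ x _).hom ≫ _ ◁ (ihom.ev x).app (𝟙_ C) =
      (λ_ ((ihom x).obj (𝟙_ C))).hom ≫ (ρ_ _).inv := by
  set H := (ihom x).obj (𝟙_ C)
  set e : x ⊗ H ⟶ 𝟙_ C := (ihom.ev x).app (𝟙_ C) with he
  set η := rigidCoev hx
  have zigzag : (ρ_ x).inv ≫ x ◁ η ≫ (α_ x H x).inv ≫ e ▷ x ≫ (λ_ x).hom = 𝟙 x := by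
    rw [reassoc_of% rigidCoev_coevaluation_evaluation hx]
    simp
  suffices h : (λ_ H).inv ≫ η ▷ H ≫ (α_ H x H).hom ≫ H ◁ e ≫ (ρ_ H).hom = 𝟙 H by
    rw [← cancel_epi (λ_ H).inv, ← cancel_mono (ρ_ H).hom]
    simpa using h
  apply uncurry_injective
  rw [uncurry_eq, uncurry_id_eq_ev, ← he]
  calc x ◁ ((λ_ H).inv ≫ η ▷ H ≫ (α_ H x H).hom ≫ H ◁ e ≫ (ρ_ H).hom) ≫ e
      = (x ◁ (λ_ H).inv ≫ x ◁ (η ▷ H) ≫ x ◁ (α_ H x H).hom ≫ (α_ x H (x ⊗ H)).inv) ≫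
          ((x ⊗ H) ◁ e ≫ (ρ_ _).hom ≫ e) := by monoidal
    _ = (x ◁ (λ_ H).inv ≫ x ◁ (η ▷ H) ≫ x ◁ (α_ H x H).hom ≫ (α_ x H (x ⊗ H)).inv) ≫
          (e ▷ (x ⊗ H) ≫ (λ_ _).hom ≫ e) := by rw [whiskerLeft_comp_rightUnitor_hom_comp]
    _ = ((ρ_ x).inv ≫ x ◁ η ≫ (α_ x H x).inv ≫ e ▷ x ≫ (λ_ x).hom) ▷ H ≫ e := by monoidal
    _ = e := by rw [zigzag, id_whiskerRight, Category.id_comp]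

abbrev IsRigid.hasLeftDual {x : C} (hx : IsRigid x) : HasLeftDual x where
  leftDual := (ihom x).obj (𝟙_ C)
  exact :=
    { coevaluation' := rigidCoev hx
      evaluation' := (ihom.ev x).app (𝟙_ C)
      coevaluation_evaluation' := rigidCoev_coevaluation_evaluation hx
      evaluation_coevaluation' := rigidCoev_evaluation_coevaluation hx }

end Rigid

section ExactPairingMap

open Functor.LaxMonoidal Functor.OplaxMonoidal

variable {A : Type u₁} {B : Type u₂} [Category.{v} A] [Category.{v} B]
  [MonoidalCategory A] [MonoidalCategory B]

abbrev exactPairingMap (F : A ⥤ B) [F.Monoidal] (X Y : A) [ExactPairing X Y] :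
    ExactPairing (F.obj X) (F.obj Y) where
  coevaluation' := ε F ≫ F.map (η_ X Y) ≫ δ F X Y
  evaluation' := μ F Y X ≫ F.map (ε_ X Y) ≫ η F
  coevaluation_evaluation' := by
    rw [Functor.Monoidal.map_associator_inv']
    simp only [MonoidalCategory.whiskerLeft_comp, comp_whiskerRight, Category.assoc,
      Functor.Monoidal.whiskerLeft_δ_μ_assoc, Functor.Monoidal.whiskerRight_δ_μ_assoc,
      μ_natural_right_assoc, δ_natural_left_assoc]
    rw [← F.map_comp_assoc, ← F.map_comp_assoc, Category.assoc,
      ExactPairing.coevaluation_evaluation]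
    simp
  evaluation_coevaluation' := by
    rw [Functor.Monoidal.map_associator']
    simp only [MonoidalCategory.whiskerLeft_comp, comp_whiskerRight, Category.assoc,
      Functor.Monoidal.whiskerLeft_δ_μ_assoc, Functor.Monoidal.whiskerRight_δ_μ_assoc,
      μ_natural_left_assoc, δ_natural_right_assoc]
    rw [← F.map_comp_assoc, ← F.map_comp_assoc, Category.assoc,
      ExactPairing.evaluation_coevaluation]
    simp

end ExactPairingMap

section Compact

variable {C : Type u₁} {D : Type u₂} [Category.{v} C] [Category.{v} D]
  [Preadditive C] [Preadditive D]

theorem isCompactObj_leftAdjoint_obj {L : C ⥤ D} {R : D ⥤ C} (adj : L ⊣ R) [R.Additive]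
    (hR : PreservesCoproducts R) {t : C} (ht : IsCompactObj t) : IsCompactObj (L.obj t) := by
  have := adj.left_adjoint_additive
  have e : preadditiveCoyoneda.obj (op (L.obj t)) ≅ R ⋙ preadditiveCoyoneda.obj (op t) :=
    NatIso.ofComponents (fun z => (adj.homAddEquiv t z).toAddCommGrpIso)
      (fun f => by
        ext g
        exact adj.homEquiv_naturality_right g f)
  intro J
  obtain ⟨_⟩ := ht J
  obtain ⟨_⟩ := hR J
  exact ⟨preservesColimitsOfShape_of_natIso e.symm⟩

variable [MonoidalCategory C] [MonoidalClosed C] [HasBinaryBiproducts C]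

theorem tensorLeft_additive (w : C) : (tensorLeft w).Additive := by
  have := preservesBinaryBiproducts_of_preservesBinaryCoproducts (tensorLeft w)
  exact Functor.additive_of_preservesBinaryBiproducts _

theorem isCompactObj_tensor {a a' b : C} [ExactPairing a' a] (hb : IsCompactObj b) :
    IsCompactObj (a ⊗ b) :=
  have := tensorLeft_additive a'
  isCompactObj_leftAdjoint_obj (tensorLeftAdjunction a' a) (fun _ => ⟨inferInstance⟩) hb

end Compact

section CompactPullback

variable {E : Type u₁} {D : Type u₂} {C : Type u₃} [Category.{v} E] [Category.{v} D]
  [Category.{v} C] [MonoidalCategory D] [MonoidalCategory C]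

def projectionIso (fstar : D ⥤ C) [fstar.Monoidal] {fpush : C ⥤ D} (adj : fstar ⊣ fpush)
    (d d' : D) [ExactPairing d d'] : fpush ⋙ tensorLeft d ≅ tensorLeft (fstar.obj d) ⋙ fpush :=
  letI := exactPairingMap fstar d d'
  ((tensorLeftAdjunction d d').comp adj).rightAdjointUniq
    ((adj.comp (tensorLeftAdjunction _ _)).ofNatIsoLeft (Functor.Monoidal.commTensorLeft fstar d'))

variable [Preadditive D] [Preadditive C] {E₀ : Set E}

theorem compactPullback_comp_subset [BraidedCategory D] [MonoidalClosed C]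
    [HasBinaryBiproducts C] (hE₀ : ∀ ⦃a b : E⦄, (a ≅ b) → b ∈ E₀ → a ∈ E₀)
    (hdual : ∀ d : D, IsCompactObj d → HasLeftDual d)
    (fstar : D ⥤ C) [fstar.Monoidal] {fpush : C ⥤ D} (adj : fstar ⊣ fpush) (gpush : D ⥤ E) :
    compactPullback (fpush ⋙ gpush) E₀ ⊆ compactPullback fpush (compactPullback gpush E₀) := by
  intro x hx c hc d hd
  have := hdual d hd
  let : ExactPairing d (ᘁd) := BraidedCategory.exactPairing_swap _ _
  let := exactPairingMap fstar (ᘁd) d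
  exact hE₀ (gpush.mapIso ((projectionIso fstar adj d (ᘁd)).app (c ⊗ x) ≪≫
    fpush.mapIso (α_ _ c x).symm)) (hx _ (isCompactObj_tensor (a' := fstar.obj (ᘁd)) hc))

theorem compactPullback_subset_compactPullback_comp
    (hE₀ : ∀ ⦃a b : E⦄, (a ≅ b) → b ∈ E₀ → a ∈ E₀) (hunit : IsCompactObj (𝟙_ D))
    (fpush : C ⥤ D) (gpush : D ⥤ E) :
    compactPullback fpush (compactPullback gpush E₀) ⊆ compactPullback (fpush ⋙ gpush) E₀ :=
  fun _ hx c hc => hE₀ (gpush.mapIso (λ_ _).symm) (hx c hc _ hunit)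

end CompactPullback

/-- Proposition 5.18: compact pull-back is compatible with
composition. -/
theorem statement16 {E : Type u₁} {D : Type u₂} {C : Type u₃}
    [Category.{v} E] [Preadditive E] [HasZeroObject E] [HasShift E ℤ]
    [∀ n : ℤ, (shiftFunctor E n).Additive] [Pretriangulated E] [IsTriangulated E]
    [MonoidalCategory E] [SymmetricCategory E] [MonoidalClosed E]
    [Category.{v} D] [Preadditive D] [HasZeroObject D] [HasShift D ℤ]
    [∀ n : ℤ, (shiftFunctor D n).Additive] [Pretriangulated D] [IsTriangulated D]
    [MonoidalCategory D] [SymmetricCategory D] [MonoidalClosed D]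
    [Category.{v} C] [Preadditive C] [HasZeroObject C] [HasShift C ℤ]
    [∀ n : ℤ, (shiftFunctor C n).Additive] [Pretriangulated C] [IsTriangulated C]
    [MonoidalCategory C] [SymmetricCategory C] [MonoidalClosed C]
    (gstar : E ⥤ D) [gstar.Braided] [gstar.CommShift ℤ] [gstar.IsTriangulated]
    (fstar : D ⥤ C) [fstar.Braided] [fstar.CommShift ℤ] [fstar.IsTriangulated]
    (hE : RigidlyCompactlyGenerated E) (hD : RigidlyCompactlyGenerated D)
    (hC : RigidlyCompactlyGenerated C)
    (hcopg : PreservesCoproducts gstar) (hcopf : PreservesCoproducts fstar)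
    (gpush : D ⥤ E) (adjg : gstar ⊣ gpush)
    (fpush : C ⥤ D) (adjf : fstar ⊣ fpush)
    (E₀ : Set E) (hmod : IsSubmodule E₀) :
    compactPullback (fpush ⋙ gpush) E₀ =
      compactPullback fpush (compactPullback gpush E₀) := by
  have hE₀ : ∀ ⦃a b : E⦄, (a ≅ b) → b ∈ E₀ → a ∈ E₀ := fun _ _ e => hmod.mem_of_iso e
  have hdual (d : D) (hd : IsCompactObj d) : HasLeftDual d :=
    ((hD.compact_iff_rigid d).mp hd).hasLeftDual
  have hunit : IsCompactObj (𝟙_ D) := (hD.compact_iff_rigid _).mpr isRigid_unit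
  exact (compactPullback_comp_subset hE₀ hdual fstar adjf gpush).antisymm
    (compactPullback_subset_compactPullback_comp hE₀ hunit fpush gpush)

end GN
end
end
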